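/- arXiv:1707.09564 — 2 statements merged into one kernel-verified Lean document; each statement's English description precedes it below -/
import Mathlib

section
/- (Perturbation bound) Let f_w be a d-layer feedforward ReLU network with weight matrices W_1, …, W_d and let U_1, …, U_d be perturbation matrices with ‖U_i‖₂ ≤ ‖W_i‖₂/d for each i. Then for any input x, |f_{w+u}(x) − f_w(x)|₂ ≤ e · |x|₂ · (∏_{i=1}^d ‖W_i‖₂) · ∑_{i=1}^d ‖U_i‖₂/‖W_i‖₂. -/
/-!
Write `Δₖ` for the difference of the two networks after layer `k`. Since
`(W + U) a - W b = (W + U) (a - b) + U b` and ReLU is 1-Lipschitz with `φ 0 = 0`,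
`|Δₖ₊₁| ≤ (‖W‖ + ‖U‖) |Δₖ| + ‖U‖ |f^k(x)|`, and `|f^k(x)| ≤ (∏_{i ≤ k} ‖W_i‖) |x|`.
If `‖U_i‖ ≤ δ ‖W_i‖`, induction gives
`|Δₖ| ≤ (1 + δ)^k (∏_{i ≤ k} ‖W_i‖) |x| ∑_{i ≤ k} ‖U_i‖ / ‖W_i‖`,
and for `δ = 1/d` the factor `(1 + 1/d)^d` is at most `e`.
-/

noncomputable def reluV {n : ℕ} (v : EuclideanSpace ℝ (Fin n)) :
    EuclideanSpace ℝ (Fin n) := WithLp.toLp 2 (fun i => max (v i) 0)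

/-- `net W i x` is the output f^i(x) of layer `i` before activation (layers are
    indexed 1,…,d): f¹(x) = W₁ x, f^{i+1}(x) = W_{i+1} φ(f^i(x)); `net W 0 x = x`. -/
noncomputable def net {n : ℕ}
    (W : ℕ → EuclideanSpace ℝ (Fin n) →L[ℝ] EuclideanSpace ℝ (Fin n)) :
    ℕ → EuclideanSpace ℝ (Fin n) → EuclideanSpace ℝ (Fin n)
  | 0, x => x
  | 1, x => W 1 x
  | (i + 2), x => W (i + 2) (reluV (net W (i + 1) x))

open Finset

lemma norm_add_apply_sub_apply_le {𝕜 E F : Type*} [NontriviallyNormedField 𝕜]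
    [SeminormedAddCommGroup E] [SeminormedAddCommGroup F] [NormedSpace 𝕜 E] [NormedSpace 𝕜 F]
    (A B : E →L[𝕜] F) (a b : E) :
    ‖(A + B) a - A b‖ ≤ (‖A‖ + ‖B‖) * ‖a - b‖ + ‖B‖ * ‖b‖ := by
  have hsplit : (A + B) a - A b = (A + B) (a - b) + B b := by
    simp only [add_apply, map_sub]
    abel
  calc ‖(A + B) a - A b‖ ≤ ‖A + B‖ * ‖a - b‖ + ‖B‖ * ‖b‖ := by
        rw [hsplit]
        exact (norm_add_le _ _).trans (add_le_add ((A + B).le_opNorm _) (B.le_opNorm _))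
    _ ≤ (‖A‖ + ‖B‖) * ‖a - b‖ + ‖B‖ * ‖b‖ := by gcongr; exact norm_add_le A B

/-- With `x / 0 = 0`, the identity also holds for `b = 0`, where the hypothesis forces `a = 0`. -/
lemma div_mul_cancel_of_le_mul {a b c : ℝ} (ha : 0 ≤ a) (hab : a ≤ c * b) : a / b * b = a := by
  rcases eq_or_ne b 0 with rfl | hb
  · simp only [mul_zero] at hab
    simp [le_antisymm hab ha]
  · exact div_mul_cancel₀ a hb

variable {n : ℕ}

lemma reluV_zero : reluV (0 : EuclideanSpace ℝ (Fin n)) = 0 := by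
  ext i
  simp [reluV]

lemma norm_reluV_sub_le (v w : EuclideanSpace ℝ (Fin n)) :
    ‖reluV v - reluV w‖ ≤ ‖v - w‖ := by
  rw [EuclideanSpace.norm_eq, EuclideanSpace.norm_eq]
  gcongr with i
  simp only [PiLp.sub_apply, reluV, Real.norm_eq_abs]
  exact abs_max_sub_max_le_abs _ _ _

/-- `net` feeds the input `x` to layer `1` without activation. -/
noncomputable def layerInput : ℕ → EuclideanSpace ℝ (Fin n) → EuclideanSpace ℝ (Fin n)
  | 0 => id
  | _ + 1 => reluV

lemma norm_layerInput_sub_le (k : ℕ) (v w : EuclideanSpace ℝ (Fin n)) :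
    ‖layerInput k v - layerInput k w‖ ≤ ‖v - w‖ := by
  cases k
  · exact le_rfl
  · exact norm_reluV_sub_le v w

lemma norm_layerInput_le (k : ℕ) (v : EuclideanSpace ℝ (Fin n)) :
    ‖layerInput k v‖ ≤ ‖v‖ := by
  have h0 : layerInput k (0 : EuclideanSpace ℝ (Fin n)) = 0 := by
    cases k
    · rfl
    · exact reluV_zero
  simpa [h0] using norm_layerInput_sub_le k v 0

variable (W U : ℕ → EuclideanSpace ℝ (Fin n) →L[ℝ] EuclideanSpace ℝ (Fin n))
  (x : EuclideanSpace ℝ (Fin n))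

lemma net_succ (k : ℕ) : net W (k + 1) x = W (k + 1) (layerInput k (net W k x)) := by
  cases k <;> rfl

lemma norm_net_le (k : ℕ) : ‖net W k x‖ ≤ (∏ i ∈ Icc 1 k, ‖W i‖) * ‖x‖ := by
  induction k with
  | zero => simp [net]
  | succ k ih =>
    rw [net_succ, prod_Icc_succ_top (by omega)]
    calc ‖W (k + 1) (layerInput k (net W k x))‖
        ≤ ‖W (k + 1)‖ * ‖net W k x‖ :=
          (W (k + 1)).le_opNorm_of_le (norm_layerInput_le k _)
      _ ≤ ‖W (k + 1)‖ * ((∏ i ∈ Icc 1 k, ‖W i‖) * ‖x‖) := by gcongr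
      _ = (∏ i ∈ Icc 1 k, ‖W i‖) * ‖W (k + 1)‖ * ‖x‖ := by ring

lemma norm_net_add_sub_net_le {δ : ℝ} (hδ : 0 ≤ δ) (k : ℕ)
    (hU : ∀ i ∈ Icc 1 k, ‖U i‖ ≤ δ * ‖W i‖) :
    ‖net (fun i => W i + U i) k x - net W k x‖ ≤
      (1 + δ) ^ k * (∏ i ∈ Icc 1 k, ‖W i‖) * ‖x‖ * ∑ i ∈ Icc 1 k, ‖U i‖ / ‖W i‖ := by
  induction k with
  | zero => simp [net]
  | succ k ih =>
    have hΔ := ih fun i hi => hU i (Icc_subset_Icc_right k.le_succ hi)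
    have hUk : ‖U (k + 1)‖ ≤ δ * ‖W (k + 1)‖ := hU _ (by simp)
    have hratio := div_mul_cancel_of_le_mul (norm_nonneg _) hUk
    have hpow : 1 ≤ (1 + δ) ^ (k + 1) := one_le_pow₀ (by linarith)
    have hP : 0 ≤ ∏ i ∈ Icc 1 k, ‖W i‖ := prod_nonneg fun _ _ => norm_nonneg _
    have hB := norm_net_le W x k
    rw [net_succ, net_succ, prod_Icc_succ_top (by omega), sum_Icc_succ_top (by omega)]
    generalize ∏ i ∈ Icc 1 k, ‖W i‖ = P at hΔ hP hB ⊢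
    generalize ∑ i ∈ Icc 1 k, ‖U i‖ / ‖W i‖ = S at hΔ ⊢
    calc _ ≤ (‖W (k + 1)‖ + ‖U (k + 1)‖) * ‖net (fun i => W i + U i) k x - net W k x‖
            + ‖U (k + 1)‖ * (P * ‖x‖) := by
          refine (norm_add_apply_sub_apply_le _ _ _ _).trans ?_
          gcongr
          · exact norm_layerInput_sub_le k _ _
          · exact (norm_layerInput_le k _).trans hB
      _ ≤ ((1 + δ) * ‖W (k + 1)‖) * ((1 + δ) ^ k * P * ‖x‖ * S)
            + (1 + δ) ^ (k + 1) * (‖U (k + 1)‖ / ‖W (k + 1)‖ * ‖W (k + 1)‖ * (P * ‖x‖)) := by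
          rw [hratio]
          exact add_le_add (mul_le_mul (by linarith) hΔ (norm_nonneg _) (by positivity))
            (le_mul_of_one_le_left (by positivity) hpow)
      _ = (1 + δ) ^ (k + 1) * (P * ‖W (k + 1)‖) * ‖x‖ * (S + ‖U (k + 1)‖ / ‖W (k + 1)‖) := by
          ring

theorem perturbation_bound_general (n d : ℕ)
    (W U : ℕ → EuclideanSpace ℝ (Fin n) →L[ℝ] EuclideanSpace ℝ (Fin n))
    (hU : ∀ i ∈ Finset.Icc 1 d, ‖U i‖ ≤ ‖W i‖ / d)
    (x : EuclideanSpace ℝ (Fin n)) :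
    ‖net (fun i => W i + U i) d x - net W d x‖ ≤
      Real.exp 1 * ‖x‖ * (∏ i ∈ Finset.Icc 1 d, ‖W i‖) *
        ∑ i ∈ Finset.Icc 1 d, ‖U i‖ / ‖W i‖ := by
  have hU' : ∀ i ∈ Icc 1 d, ‖U i‖ ≤ (d : ℝ)⁻¹ * ‖W i‖ := fun i hi =>
    (hU i hi).trans_eq (div_eq_inv_mul _ _)
  calc _ ≤ (1 + (d : ℝ)⁻¹) ^ d * (∏ i ∈ Icc 1 d, ‖W i‖) * ‖x‖ *
          ∑ i ∈ Icc 1 d, ‖U i‖ / ‖W i‖ :=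
        norm_net_add_sub_net_le W U x (by positivity) d hU'
    _ ≤ Real.exp 1 * (∏ i ∈ Icc 1 d, ‖W i‖) * ‖x‖ * ∑ i ∈ Icc 1 d, ‖U i‖ / ‖W i‖ := by
        gcongr
        exact Real.one_add_inv_pow_le_exp
    _ = _ := by ring

/-- Perturbation bound: if ‖U_i‖₂ ≤ ‖W_i‖₂/d for each layer
    i = 1,…,d, then for any input x,
    |f_{w+u}(x) − f_w(x)|₂ ≤ e·|x|₂·(∏_{i=1}^d ‖W_i‖₂)·∑_{i=1}^d ‖U_i‖₂/‖W_i‖₂. -/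
theorem perturbation_bound (n d : ℕ) (hd : 1 ≤ d)
    (W U : ℕ → EuclideanSpace ℝ (Fin n) →L[ℝ] EuclideanSpace ℝ (Fin n))
    (hW : ∀ i ∈ Finset.Icc 1 d, 0 < ‖W i‖)
    (hU : ∀ i ∈ Finset.Icc 1 d, ‖U i‖ ≤ ‖W i‖ / d)
    (x : EuclideanSpace ℝ (Fin n)) :
    ‖net (fun i => W i + U i) d x - net W d x‖ ≤
      Real.exp 1 * ‖x‖ * (∏ i ∈ Finset.Icc 1 d, ‖W i‖) *
        ∑ i ∈ Finset.Icc 1 d, ‖U i‖ / ‖W i‖ :=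
  perturbation_bound_general n d W U hU x
end

section
/- (KL of restriction) Let q and p be probability density functions, let S be a measurable set with Z = ∫_S q ≥ 1/2, and let q̃ be q restricted to S and renormalized (q̃ = q·1_S/Z). Then KL(q̃ ‖ p) ≤ 2(KL(q ‖ p) + 1). -/
open MeasureTheory

/-- Pointwise chain-rule identity for the KL integrand, respecting Lean's
    `x / 0 = 0` and `log 0 = 0` conventions. -/
lemma kl_key_ident (a b c : ℝ) (ha : 0 ≤ a) (hb : 0 ≤ b) (hc : 0 < c) :
    (a / c) * Real.log ((a / c) / b) =
      (1 / c) * (a * Real.log (a / b)) - (Real.log c / c) * (if b = 0 then 0 else a) := by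
  rcases eq_or_lt_of_le hb with hb0 | hb0
  · subst hb0
    simp [div_zero, Real.log_zero]
  · rw [if_neg (ne_of_gt hb0)]
    rcases eq_or_lt_of_le ha with ha0 | ha0
    · subst ha0
      simp
    · have h1 : (a / c) / b = (a / b) / c := by ring
      rw [h1, Real.log_div (by positivity) (ne_of_gt hc)]
      ring

/-- KL of restriction: if q, p are probability densities (w.r.t. μ),
    S is measurable with Z = ∫_S q ≥ 1/2, and q̃ = q·1_S/Z is the normalized
    restriction of q to S, then KL(q̃‖p) ≤ 2(KL(q‖p) + 1).
    (As in the paper, KL(q‖p) is assumed finite and nonnegative, and the KL of the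
    normalized restriction of q to Sᶜ against p is assumed finite and nonnegative.) -/
theorem kl_of_restriction {α : Type*} [MeasurableSpace α] (μ : Measure α)
    (q p : α → ℝ) (S : Set α) (hS : MeasurableSet S)
    (hq : ∀ x, 0 ≤ q x) (hp : ∀ x, 0 ≤ p x)
    (hq1 : ∫ x, q x ∂μ = 1) (hp1 : ∫ x, p x ∂μ = 1)
    (Z : ℝ) (hZ : Z = ∫ x in S, q x ∂μ) (hZhalf : 1 / 2 ≤ Z)
    (hqint : Integrable q μ)
    (hint : Integrable (fun x => q x * Real.log (q x / p x)) μ)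
    (hintS : IntegrableOn (fun x => q x * Real.log (q x / p x)) S μ)
    (hKL : 0 ≤ ∫ x, q x * Real.log (q x / p x) ∂μ)
    (hKLc : 0 ≤ ∫ x, (Sᶜ.indicator q x / (1 - Z)) *
        Real.log ((Sᶜ.indicator q x / (1 - Z)) / p x) ∂μ) :
    ∫ x, (S.indicator q x / Z) * Real.log ((S.indicator q x / Z) / p x) ∂μ ≤
      2 * ((∫ x, q x * Real.log (q x / p x) ∂μ) + 1) := by
  have hZpos : 0 < Z := by linarith
  have hZle1 : Z ≤ 1 := by
    rw [hZ, ← hq1]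
    exact setIntegral_le_integral hqint (ae_of_all _ hq)
  -- p is integrable since its integral is 1 ≠ 0
  have hpint : Integrable p μ := by
    by_contra h
    rw [integral_undef h] at hp1
    norm_num at hp1
  set f : α → ℝ := fun x => q x * Real.log (q x / p x) with hf
  set r : α → ℝ := fun x => if p x = 0 then 0 else q x with hrdef
  -- r is a.e. strongly measurable and integrable
  have hr_aesm : AEStronglyMeasurable r μ := by
    obtain ⟨p', hp'm, hpp'⟩ := hpint.aemeasurable
    obtain ⟨q', hq'm, hqq'⟩ := hqint.aemeasurable
    have : AEMeasurable r μ := by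
      refine ⟨fun x => if p' x = 0 then 0 else q' x,
        Measurable.ite (hp'm (measurableSet_singleton 0)) measurable_const hq'm, ?_⟩
      filter_upwards [hpp', hqq'] with x h1 h2
      simp only [hrdef, h1, h2]
    exact this.aestronglyMeasurable
  have hr_nonneg : ∀ x, 0 ≤ r x := by
    intro x; simp only [hrdef]; split <;> simp [hq x]
  have hr_le : ∀ x, r x ≤ q x := by
    intro x; simp only [hrdef]; split <;> simp [hq x]
  have hrint : Integrable r μ := by
    refine hqint.mono hr_aesm (ae_of_all _ fun x => ?_)
    rw [Real.norm_eq_abs, Real.norm_eq_abs, abs_of_nonneg (hr_nonneg x),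
      abs_of_nonneg (hq x)]
    exact hr_le x
  have hfS : Integrable (S.indicator f) μ := (integrable_indicator_iff hS).mpr hintS
  -- Pointwise identity over any measurable set T with normalizer c > 0
  have ident : ∀ (T : Set α) (c : ℝ), 0 < c → ∀ x,
      (T.indicator q x / c) * Real.log ((T.indicator q x / c) / p x)
        = (1 / c) * T.indicator f x - (Real.log c / c) * T.indicator r x := by
    intro T c hc x
    by_cases hx : x ∈ T
    · simp only [Set.indicator_of_mem hx, hf, hrdef]
      exact kl_key_ident (q x) (p x) c (hq x) (hp x) hc
    · simp [Set.indicator_of_notMem hx]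
  -- Integral identity over a measurable set
  have calcT : ∀ (T : Set α), MeasurableSet T → ∀ (c : ℝ), 0 < c →
      ∫ x, (T.indicator q x / c) * Real.log ((T.indicator q x / c) / p x) ∂μ
        = (1 / c) * (∫ x in T, f x ∂μ) - (Real.log c / c) * (∫ x in T, r x ∂μ) := by
    intro T hT c hc
    have hfT : Integrable (T.indicator f) μ :=
      (integrable_indicator_iff hT).mpr hint.integrableOn
    have hrT : Integrable (T.indicator r) μ := hrint.indicator hT
    rw [integral_congr_ae (ae_of_all _ (ident T c hc)),
      integral_sub (hfT.const_mul _) (hrT.const_mul _),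
      integral_const_mul, integral_const_mul, integral_indicator hT, integral_indicator hT]
  set KL := ∫ x, f x ∂μ with hKLdef
  have hsplit : (∫ x in S, f x ∂μ) + (∫ x in Sᶜ, f x ∂μ) = KL :=
    integral_add_compl hS hint
  have hqsplit : Z + (∫ x in Sᶜ, q x ∂μ) = 1 := by
    rw [hZ, ← hq1]; exact integral_add_compl hS hqint
  -- bounds on ∫_S r
  have hrS0 : 0 ≤ ∫ x in S, r x ∂μ := setIntegral_nonneg hS fun x _ => hr_nonneg x
  have hrSle : (∫ x in S, r x ∂μ) ≤ Z := by
    rw [hZ]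
    exact setIntegral_mono hrint.integrableOn hqint.integrableOn hr_le
  have hlogZ : Real.log Z ≤ 0 := Real.log_nonpos hZpos.le hZle1
  -- -Z log Z ≤ 1 - Z
  have hNZ : -(Z * Real.log Z) ≤ 1 - Z := by
    have h := Real.log_le_sub_one_of_pos (inv_pos.mpr hZpos)
    rw [Real.log_inv] at h
    have h2 := mul_le_mul_of_nonneg_left h hZpos.le
    have h3 : Z * Z⁻¹ = 1 := mul_inv_cancel₀ (ne_of_gt hZpos)
    nlinarith
  -- complement lower bound : ∫_{Sᶜ} f ≥ -Z
  have hcomp : -Z ≤ ∫ x in Sᶜ, f x ∂μ := by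
    set W := ∫ x in Sᶜ, q x ∂μ with hW
    have hW0 : 0 ≤ W := setIntegral_nonneg hS.compl fun x _ => hq x
    have hWeq : W = 1 - Z := by linarith
    rcases eq_or_lt_of_le hW0 with h0 | hWpos
    · -- W = 0: q vanishes a.e. on Sᶜ so the integral is 0
      have hq0 : q =ᵐ[μ.restrict Sᶜ] 0 := by
        have := (integral_eq_zero_iff_of_nonneg hq hqint.restrict).mp h0.symm
        exact this
      have hf0 : f =ᵐ[μ.restrict Sᶜ] 0 := by
        filter_upwards [hq0] with x hx
        simp [hf, hx]
      have hzero : ∫ x in Sᶜ, f x ∂μ = 0 := by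
        rw [integral_congr_ae hf0]; simp
      rw [hzero]; linarith
    · -- W > 0: use hKLc via the chain identity
      have hcalc2 := calcT Sᶜ hS.compl W hWpos
      rw [← hWeq] at hKLc
      rw [hcalc2] at hKLc
      set F := ∫ x in Sᶜ, f x ∂μ with hF
      set R := ∫ x in Sᶜ, r x ∂μ with hR
      have hR0 : 0 ≤ R := setIntegral_nonneg hS.compl fun x _ => hr_nonneg x
      have hRle : R ≤ W := setIntegral_mono hrint.integrableOn hqint.integrableOn hr_le
      have hWle1 : W ≤ 1 := by linarith
      have hlogW : Real.log W ≤ 0 := Real.log_nonpos hW0 hWle1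
      have h1 : Real.log W * W ≤ Real.log W * R := mul_le_mul_of_nonpos_left hRle hlogW
      have h2 : -(W * Real.log W) ≤ 1 - W := by
        have h := Real.log_le_sub_one_of_pos (inv_pos.mpr hWpos)
        rw [Real.log_inv] at h
        have h2 := mul_le_mul_of_nonneg_left h hW0
        have h3 : W * W⁻¹ = 1 := mul_inv_cancel₀ (ne_of_gt hWpos)
        nlinarith
      have h3 : Real.log W * R ≤ F := by
        have h4 := mul_nonneg hWpos.le hKLc
        have h5 : W * ((1 / W) * F - (Real.log W / W) * R) = F - Real.log W * R := by
          field_simp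
        rw [h5] at h4
        linarith
      nlinarith
  -- main computation
  have hAcalc := calcT S hS Z hZpos
  rw [hAcalc]
  have hSf_le : (∫ x in S, f x ∂μ) ≤ KL + Z := by linarith
  have hterm2 : -(Real.log Z) * (∫ x in S, r x ∂μ) ≤ 1 - Z := by
    have h1 : -(Real.log Z) * (∫ x in S, r x ∂μ) ≤ -(Real.log Z) * Z :=
      mul_le_mul_of_nonneg_left hrSle (by linarith)
    nlinarith
  set I1 := ∫ x in S, f x ∂μ
  set I2 := ∫ x in S, r x ∂μ
  have hZA : Z * ((1 / Z) * I1 - (Real.log Z / Z) * I2) = I1 - Real.log Z * I2 := by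
    field_simp
  have hmain : Z * ((1 / Z) * I1 - (Real.log Z / Z) * I2) ≤ KL + 1 := by
    rw [hZA]; linarith
  have hKL1 : (0:ℝ) < KL + 1 := by linarith
  have step1 : (1 / Z) * I1 - (Real.log Z / Z) * I2 ≤ (KL + 1) / Z := by
    rw [le_div_iff₀ hZpos]
    linarith [hmain, mul_comm Z ((1 / Z) * I1 - (Real.log Z / Z) * I2)]
  have step2 : (KL + 1) / Z ≤ 2 * (KL + 1) := by
    rw [div_le_iff₀ hZpos]
    nlinarith
  linarith
end
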